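/- arXiv:1011.1868 — 2 statements merged into one kernel-verified Lean document; each statement's English description precedes it below -/
import Mathlib

section
/- Let 0 < ε < 1/6 and set ε' = ε − 6ε² (so ε' > 0). Let n ≥ 2 and R ≥ 1 be natural numbers, let m be a natural number with m ≥ (1−2ε)·n·R, and let X₁, …, X_m be independent random variables each uniformly distributed on Fin n. Let I ⊆ Fin n be a set with |I| ≥ (1+3ε)·ln(n)/R. Then the probability that X_i ∉ I for all i = 1, …, m is at most n^(−1−ε'). -/
open MeasureTheory ProbabilityTheory
open scoped ENNReal

/-!
The `m` calls are independent and each misses `I` with probability `1 - |I|/n ≤ exp (-|I|/n)`,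
so all of them miss `I` with probability at most `exp (-m|I|/n)`. The hypotheses give
`m|I|/n ≥ (1 - 2ε)(1 + 3ε) ln n = (1 + ε') ln n`.
-/

lemma measure_preimage_finset_le_card_mul {Ω α : Type*} [MeasurableSpace Ω] {μ : Measure Ω}
    {X : Ω → α} {c : ℝ≥0∞} (s : Finset α) (h : ∀ a ∈ s, μ {ω | X ω = a} ≤ c) :
    μ (X ⁻¹' s) ≤ s.card * c := by
  have hpre : X ⁻¹' s = ⋃ a ∈ s, {ω | X ω = a} := by ext; simp
  calc μ (X ⁻¹' s) ≤ ∑ a ∈ s, μ {ω | X ω = a} := hpre ▸ measure_biUnion_finset_le s _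
    _ ≤ ∑ _a ∈ s, c := Finset.sum_le_sum h
    _ = s.card * c := by rw [Finset.sum_const, nsmul_eq_mul]

lemma ProbabilityTheory.iIndepFun.measure_iInter_preimage_le_pow {Ω ι α : Type*}
    [MeasurableSpace Ω] [MeasurableSpace α] [Fintype ι] {μ : Measure Ω} {X : ι → Ω → α} (hX : iIndepFun X μ)
    {s : Set α} (hs : MeasurableSet s) {c : ℝ≥0∞} (h : ∀ i, μ (X i ⁻¹' s) ≤ c) :
    μ (⋂ i, X i ⁻¹' s) ≤ c ^ Fintype.card ι := by
  rw [hX.meas_iInter fun i => ⟨s, hs, rfl⟩, ← Finset.card_univ, ← Finset.prod_const]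
  exact Finset.prod_le_prod' fun i _ => h i

lemma measure_preimage_compl_le_of_uniform {Ω : Type*} [MeasurableSpace Ω] {μ : Measure Ω}
    {n : ℕ} (hn : 0 < n) {X : Ω → Fin n} (hX : ∀ a, μ {ω | X ω = a} = 1 / n)
    (I : Finset (Fin n)) :
    μ (X ⁻¹' ↑Iᶜ) ≤ ENNReal.ofReal (1 - I.card / n) := by
  have hn0 : (0 : ℝ) < n := Nat.cast_pos.mpr hn
  have hcompl : 1 - (I.card : ℝ) / n = (Iᶜ.card : ℝ) / n := by
    rw [Finset.card_compl, Fintype.card_fin, Nat.cast_sub (by simpa using I.card_le_univ)]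
    field_simp
  rw [hcompl, ENNReal.ofReal_div_of_pos hn0, ENNReal.ofReal_natCast, ENNReal.ofReal_natCast,
    ← mul_one_div]
  exact measure_preimage_finset_le_card_mul Iᶜ fun a _ => (hX a).le

lemma Real.one_sub_pow_le_exp_neg_mul {x : ℝ} (hx : x ≤ 1) (m : ℕ) :
    (1 - x) ^ m ≤ Real.exp (-(m * x)) := by
  rw [neg_mul_eq_mul_neg, Real.exp_nat_mul]
  exact pow_le_pow_left₀ (by linarith) (Real.one_sub_le_exp_neg x) m

lemma Real.exp_neg_le_rpow_neg {n a b : ℝ} (hn : 0 < n) (hab : a * Real.log n ≤ b) :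
    Real.exp (-b) ≤ n ^ (-a) := by
  rw [Real.rpow_def_of_pos hn, Real.exp_le_exp]
  linarith

lemma mul_le_mul_div_of_le_of_div_le {a c k m n R : ℝ} (hc : 0 ≤ c) (hk : 0 ≤ k) (hn : 0 < n)
    (hR : 0 < R) (hm : c * n * R ≤ m) (ha : a / R ≤ k) : c * a ≤ m * (k / n) := by
  calc c * a = c * n * R * (a / R) / n := by field_simp
    _ ≤ m * k / n := by
      refine div_le_div_of_nonneg_right ?_ hn.le
      exact (mul_le_mul_of_nonneg_left ha (by positivity)).trans (mul_le_mul_of_nonneg_right hm hk)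
    _ = m * (k / n) := mul_div_assoc _ _ _

theorem stmt1_general {Ω : Type*} [MeasurableSpace Ω] (μ : Measure Ω) [IsProbabilityMeasure μ]
    (ε ε' : ℝ) (hε6 : ε < 1/6) (hε' : ε' = ε - 6*ε^2)
    (n R m : ℕ) (hn : 2 ≤ n) (hR : 1 ≤ R) (hm : (1 - 2*ε) * n * R ≤ (m : ℝ))
    (X : Fin m → Ω → Fin n)
    (hindep : iIndepFun X μ)
    (hunif : ∀ i (a : Fin n), μ {ω | X i ω = a} = 1 / n)
    (I : Finset (Fin n)) (hI : (1 + 3*ε) * Real.log n / R ≤ (I.card : ℝ)) :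
    μ {ω | ∀ i, X i ω ∉ I} ≤ ENNReal.ofReal ((n : ℝ) ^ (-1 - ε')) := by
  have hn0 : (0 : ℝ) < n := by positivity
  have hR0 : (0 : ℝ) < R := by exact_mod_cast hR
  have hkn : (I.card : ℝ) / n ≤ 1 :=
    div_le_one_of_le₀ (by simpa using I.card_le_univ) hn0.le
  have hexpected : (1 + ε') * Real.log n ≤ m * (I.card / n) := by
    rw [hε', show 1 + (ε - 6*ε^2) = (1 - 2*ε) * (1 + 3*ε) by ring, mul_assoc]
    exact mul_le_mul_div_of_le_of_div_le (by linarith) (Nat.cast_nonneg _) hn0 hR0 hm hI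
  have hall : {ω | ∀ i, X i ω ∉ I} = ⋂ i, X i ⁻¹' ↑Iᶜ := by ext; simp
  calc μ {ω | ∀ i, X i ω ∉ I} ≤ ENNReal.ofReal (1 - I.card / n) ^ m := by
        simpa [hall] using hindep.measure_iInter_preimage_le_pow (Finset.measurableSet _)
          fun i => measure_preimage_compl_le_of_uniform (by omega) (hunif i) I
    _ = ENNReal.ofReal ((1 - I.card / n) ^ m) := (ENNReal.ofReal_pow (by linarith) m).symm
    _ ≤ ENNReal.ofReal ((n : ℝ) ^ (-1 - ε')) := by
        refine ENNReal.ofReal_le_ofReal ((Real.one_sub_pow_le_exp_neg_mul hkn m).trans ?_)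
        rw [sub_eq_add_neg, ← neg_add]
        exact Real.exp_neg_le_rpow_neg hn0 hexpected

/-- Second-phase estimate in the upper-bound analysis of the hybrid rumor-spreading protocol:
`m ≥ (1-2ε)nR` independent uniform random calls all avoid a fixed set `I` of at least
`(1+3ε)·ln(n)/R` nodes with probability at most `n^(-1-ε')`, where `ε' = ε - 6ε²`. -/
theorem stmt1 {Ω : Type*} [MeasurableSpace Ω] (μ : Measure Ω) [IsProbabilityMeasure μ]
    (ε ε' : ℝ) (hε : 0 < ε) (hε6 : ε < 1/6) (hε' : ε' = ε - 6*ε^2)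
    (n R m : ℕ) (hn : 2 ≤ n) (hR : 1 ≤ R) (hm : (1 - 2*ε) * n * R ≤ (m : ℝ))
    (X : Fin m → Ω → Fin n) (hmeas : ∀ i, Measurable (X i))
    (hindep : iIndepFun X μ)
    (hunif : ∀ i (a : Fin n), μ {ω | X i ω = a} = 1 / n)
    (I : Finset (Fin n)) (hI : (1 + 3*ε) * Real.log n / R ≤ (I.card : ℝ)) :
    μ {ω | ∀ i, X i ω ∉ I} ≤ ENNReal.ofReal ((n : ℝ) ^ (-1 - ε')) :=
  stmt1_general μ ε ε' hε6 hε' n R m hn hR hm X hindep hunif I hI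
end

section
/- Let 0 < ε < 1 and let C > 0. For each natural number n ≥ 2, let R(n) ≥ 1 be a natural number and set Δ(n) = (1−ε)·ln(n)/R(n) + R(n)/2. Assume that R(n) ≤ Δ(n) and Δ(n) ≤ C·√(ln n) for all n. Then for every δ > 0 there exists N such that for all n ≥ N: ∏_{j=1}^{R(n)} (1 − (Δ(n)−j)/n)ⁿ ≥ (1−δ)·n^(−1+ε). -/
/-!
Each factor satisfies `1 - x ≥ exp (-(x + 2x²))` for `x ≤ 1/2`. The linear terms add up to
`RΔ - R(R+1)/2 ≤ (1-ε) ln n` by the choice of `Δ`, which yields `n^(-1+ε)`, while the quadratic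
terms cost at most `2Δ³/n = O((ln n)^(3/2)/n) → 0`.
-/

open Finset Filter Topology Real

theorem Real.exp_neg_add_two_mul_sq_le_one_sub {x : ℝ} (hx : x ≤ 1 / 2) :
    exp (-(x + 2 * x ^ 2)) ≤ 1 - x := by
  have hpos : 0 < 1 - x := by linarith
  -- `(1 - x)(1 + x + 2x²) = 1 + x²(1 - 2x) ≥ 1`, and `log y ≤ y - 1` at `y = (1 - x)⁻¹`
  have hinv : (1 - x)⁻¹ ≤ 1 + x + 2 * x ^ 2 := by
    rw [inv_le_iff_one_le_mul₀ hpos]; nlinarith [sq_nonneg x]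
  have hlog := log_le_sub_one_of_pos (inv_pos.mpr hpos)
  rw [log_inv] at hlog
  rw [← exp_log hpos, exp_le_exp]
  linarith

theorem exp_neg_le_prod_one_sub_div_pow {ι : Type*} (s : Finset ι) (a : ι → ℝ) {n : ℕ}
    (hn : 0 < n) (ha : ∀ i ∈ s, a i ≤ n / 2) :
    exp (-(∑ i ∈ s, a i + 2 * (∑ i ∈ s, a i ^ 2) / n)) ≤ ∏ i ∈ s, (1 - a i / n) ^ n := by
  have hn' : (0 : ℝ) < n := Nat.cast_pos.mpr hn
  rw [mul_div_assoc, sum_div, mul_sum, ← sum_add_distrib, ← sum_neg_distrib, exp_sum]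
  refine prod_le_prod (fun _ _ => (exp_pos _).le) fun i hi => ?_
  have hx : a i / n ≤ 1 / 2 := by rw [div_le_iff₀ hn']; linarith [ha i hi]
  calc exp (-(a i + 2 * (a i ^ 2 / n))) = exp (-(a i / n + 2 * (a i / n) ^ 2)) ^ n := by
        rw [← exp_nat_mul]; congr 1; field_simp
    _ ≤ (1 - a i / n) ^ n :=
        pow_le_pow_left₀ (exp_pos _).le (exp_neg_add_two_mul_sq_le_one_sub hx) n

theorem sum_Icc_natCast (m : ℕ) : ∑ j ∈ Icc 1 m, (j : ℝ) = m * (m + 1) / 2 := by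
  induction m with
  | zero => simp
  | succ k ih =>
    rw [sum_Icc_succ_top (by omega), ih]
    push_cast; ring

theorem sum_Icc_sub_natCast (R : ℕ) (Δ : ℝ) :
    ∑ j ∈ Icc 1 R, (Δ - j) = R * Δ - R * (R + 1) / 2 := by
  rw [sum_sub_distrib, sum_const, sum_Icc_natCast, Nat.card_Icc, nsmul_eq_mul,
    Nat.add_sub_cancel]

theorem sum_Icc_sub_natCast_sq_le {R : ℕ} {Δ : ℝ} (hRΔ : R ≤ Δ) :
    ∑ j ∈ Icc 1 R, (Δ - j) ^ 2 ≤ Δ ^ 3 := by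
  have hterm : ∀ j ∈ Icc 1 R, (Δ - j) ^ 2 ≤ Δ ^ 2 := fun j hj => by
    have hj : (1 : ℝ) ≤ j ∧ (j : ℝ) ≤ R := by
      obtain ⟨h1, h2⟩ := mem_Icc.mp hj; exact ⟨by exact_mod_cast h1, by exact_mod_cast h2⟩
    apply pow_le_pow_left₀ <;> linarith
  calc ∑ j ∈ Icc 1 R, (Δ - j) ^ 2 ≤ R * Δ ^ 2 := by
        simpa using sum_le_card_nsmul _ _ _ hterm
    _ ≤ Δ * Δ ^ 2 := by gcongr
    _ = Δ ^ 3 := by ring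

theorem tendsto_sqrt_log_pow_div_natCast_atTop (k : ℕ) :
    Tendsto (fun n : ℕ => √(log n) ^ k / n) atTop (𝓝 0) := by
  have hreal : Tendsto (fun x : ℝ => log x ^ (k / 2 : ℝ) / x) atTop (𝓝 0) := by
    simpa using (isLittleO_log_rpow_rpow_atTop (k / 2 : ℝ) one_pos).tendsto_div_nhds_zero
  refine (hreal.comp tendsto_natCast_atTop_atTop).congr' ?_
  filter_upwards [eventually_ge_atTop 1] with n hn
  have hlog : 0 ≤ log n := log_nonneg (by exact_mod_cast hn)
  simp only [Function.comp_apply]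
  rw [sqrt_eq_rpow, ← rpow_natCast, ← rpow_mul hlog]
  ring_nf

theorem exp_neg_le_prod_one_sub_sub_natCast_div_pow {n R : ℕ} {Δ : ℝ} (hn : 0 < n)
    (hRΔ : R ≤ Δ) (hΔn : Δ ≤ n / 2) :
    exp (-(R * Δ - R * (R + 1) / 2) - 2 * Δ ^ 3 / n) ≤
      ∏ j ∈ Icc 1 R, (1 - (Δ - j) / n) ^ n := by
  refine le_trans ?_ (exp_neg_le_prod_one_sub_div_pow _ _ hn fun j _ => by
    linarith [(Nat.cast_nonneg j : (0 : ℝ) ≤ j)])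
  rw [exp_le_exp, sum_Icc_sub_natCast, neg_add, sub_eq_add_neg]
  gcongr
  exact sum_Icc_sub_natCast_sq_le hRΔ

theorem stmt4_general (ε C : ℝ)
    (R : ℕ → ℕ) (hR : ∀ n, 2 ≤ n → 1 ≤ R n)
    (Δ : ℕ → ℝ) (hΔ : ∀ n, 2 ≤ n → Δ n = (1 - ε) * Real.log n / (R n) + (R n) / 2)
    (hRΔ : ∀ n, 2 ≤ n → (R n : ℝ) ≤ Δ n)
    (hΔC : ∀ n, 2 ≤ n → Δ n ≤ C * Real.sqrt (Real.log n)) :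
    ∀ δ : ℝ, 0 < δ → ∃ N : ℕ, ∀ n, N ≤ n →
      (∏ j ∈ Finset.Icc 1 (R n), (1 - (Δ n - j) / n) ^ n) ≥
        (1 - δ) * (n : ℝ) ^ (-1 + ε) := by
  intro δ hδ
  have hlim : Tendsto (fun n : ℕ => 2 * (C * √(log n)) ^ 3 / n) atTop (𝓝 0) := by
    have h := (tendsto_sqrt_log_pow_div_natCast_atTop 3).const_mul (2 * C ^ 3)
    rw [mul_zero] at h
    exact h.congr fun n => by ring
  obtain ⟨N, hN⟩ := eventually_atTop.mp (hlim.eventually (ge_mem_nhds (lt_min one_pos hδ)))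
  refine ⟨max N 2, fun n hn => ?_⟩
  have hn2 : 2 ≤ n := le_of_max_le_right hn
  have hn0 : (0 : ℝ) < n := by positivity
  have hR1 : (1 : ℝ) ≤ R n := by exact_mod_cast hR n hn2
  have hΔ1 : 1 ≤ Δ n := hR1.trans (hRΔ n hn2)
  have herr : 2 * Δ n ^ 3 / n ≤ min 1 δ :=
    le_trans (by gcongr; exact hΔC n hn2) (hN n (le_of_max_le_left hn))
  have hΔn : Δ n ≤ n / 2 := by
    rw [le_min_iff, div_le_one hn0] at herr
    nlinarith [pow_le_pow_right₀ hΔ1 (show 1 ≤ 3 by norm_num)]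
  have hlinear : R n * Δ n - R n * (R n + 1) / 2 ≤ (1 - ε) * log n := by
    rw [hΔ n hn2]; field_simp; nlinarith
  have hpow : (n : ℝ) ^ (-1 + ε) = exp (-((1 - ε) * log n)) := by
    rw [rpow_def_of_pos hn0]; ring_nf
  calc (1 - δ) * (n : ℝ) ^ (-1 + ε) ≤ exp (-(2 * Δ n ^ 3 / n)) * exp (-((1 - ε) * log n)) := by
        rw [hpow]; gcongr
        linarith [add_one_le_exp (-(2 * Δ n ^ 3 / n)), min_le_right 1 δ]
    _ ≤ exp (-(R n * Δ n - R n * (R n + 1) / 2) - 2 * Δ n ^ 3 / n) := by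
        rw [← exp_add, exp_le_exp]; linarith
    _ ≤ _ := exp_neg_le_prod_one_sub_sub_natCast_div_pow (by omega) (hRΔ n hn2) hΔn

/-- Third-phase estimate in the lower-bound proof of the hybrid rumor-spreading protocol
(case `R ≤ Δ`): with `Δ(n) = (1-ε)·ln(n)/R(n) + R(n)/2` and `Δ(n) ≤ C√(ln n)`,
`∏_{j=1}^{R(n)} (1 - (Δ(n)-j)/n)ⁿ ≥ (1-δ)·n^(-1+ε)` for all sufficiently large `n`. -/
theorem stmt4 (ε C : ℝ) (hε : 0 < ε) (hε1 : ε < 1) (hC : 0 < C)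
    (R : ℕ → ℕ) (hR : ∀ n, 2 ≤ n → 1 ≤ R n)
    (Δ : ℕ → ℝ) (hΔ : ∀ n, 2 ≤ n → Δ n = (1 - ε) * Real.log n / (R n) + (R n) / 2)
    (hRΔ : ∀ n, 2 ≤ n → (R n : ℝ) ≤ Δ n)
    (hΔC : ∀ n, 2 ≤ n → Δ n ≤ C * Real.sqrt (Real.log n)) :
    ∀ δ : ℝ, 0 < δ → ∃ N : ℕ, ∀ n, N ≤ n →
      (∏ j ∈ Finset.Icc 1 (R n), (1 - (Δ n - j) / n) ^ n) ≥
        (1 - δ) * (n : ℝ) ^ (-1 + ε) :=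
  stmt4_general ε C R hR Δ hΔ hRΔ hΔC
end
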